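/- The scoped message-passing execution with non-inclusive scopes and a stale read is SRC11-consistent: let E = {e₀, e₁, e₂, e₃, e₄, e₅} with loc e₀ = loc e₂ = loc e₅ = X and loc e₁ = loc e₃ = loc e₄ = Y; let W = {e₀, e₁, e₂, e₃}, Wrlx = W, Erel = {e₂, e₃}, Eacq = {e₄}, F = ∅, Esc = ∅, Fsc = ∅; let incl relate exactly those pairs of same-location events in which at least one of e₀, e₁ occurs (initialization writes have system scope), so that in particular neither (e₃, e₄) nor (e₂, e₅) is in incl; let po be the transitive closure of {(e₀,e₂), (e₁,e₂), (e₀,e₄), (e₁,e₄), (e₂,e₃), (e₄,e₅)}, rf = {(e₃,e₄), (e₀,e₅)}, co = {(e₀,e₂), (e₁,e₃)}, rmw = ∅. Then all four SRC11 axioms hold: hb;eco^? is irreflexive, rmw ∩ (fr;co) is empty, incl ∩ psc is acyclic, and po ∪ rf is acyclic. -/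
import Mathlib


namespace SRC11

variable {E Loc : Type*}

/-- Relational composition `r;s`. -/
def rcomp (r s : E → E → Prop) : E → E → Prop := fun a c => ∃ b, r a b ∧ s b c
/-- Union of relations. -/
def runion (r s : E → E → Prop) : E → E → Prop := fun a b => r a b ∨ s a b
/-- Intersection of relations. -/
def rinter (r s : E → E → Prop) : E → E → Prop := fun a b => r a b ∧ s a b
/-- Inverse `r⁻¹`. -/
def rinv (r : E → E → Prop) : E → E → Prop := fun a b => r b a
/-- Identity relation restricted to a predicate: `[A]`. -/
def rid (A : E → Prop) : E → E → Prop := fun a b => a = b ∧ A a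
/-- Reflexive closure `r^?`. -/
def ropt (r : E → E → Prop) : E → E → Prop := fun a b => a = b ∨ r a b
/-- Transitive closure `r⁺`. -/
def rtrans (r : E → E → Prop) : E → E → Prop := Relation.TransGen r
/-- Reflexive-transitive closure `r^*`. -/
def rstar (r : E → E → Prop) : E → E → Prop := Relation.ReflTransGen r
/-- `r|loc` : restriction to same-location pairs. -/
def sameLoc (loc : E → Loc) (r : E → E → Prop) : E → E → Prop :=
  fun a b => r a b ∧ loc a = loc b
/-- `r|≠loc` : restriction to different-location pairs. -/
def diffLoc (loc : E → Loc) (r : E → E → Prop) : E → E → Prop :=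
  fun a b => r a b ∧ loc a ≠ loc b
/-- A relation is irreflexive. -/
def Irrefl (r : E → E → Prop) : Prop := ∀ a, ¬ r a a
/-- A relation is acyclic if its transitive closure is irreflexive. -/
def Acyclic (r : E → E → Prop) : Prop := Irrefl (rtrans r)

/-- from-read: `fr = rf⁻¹;co`. -/
def fr (rf co : E → E → Prop) : E → E → Prop := rcomp (rinv rf) co

/-- extended coherence order: `eco = (rf ∪ co ∪ fr)⁺`. -/
def eco (rf co : E → E → Prop) : E → E → Prop :=
  rtrans (runion rf (runion co (fr rf co)))

/-- release sequence: `rseq = [W];(po|loc)^?;[Wrlx];((incl ∩ rf);rmw)^*`. -/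
def rseq (loc : E → Loc) (W Wrlx : E → Prop) (incl po rf rmw : E → E → Prop) :
    E → E → Prop :=
  rcomp (rid W) (rcomp (ropt (sameLoc loc po))
    (rcomp (rid Wrlx) (rstar (rcomp (rinter incl rf) rmw))))

/-- `prel = [Erel];([F];po)^?`. -/
def prel (Erel F : E → Prop) (po : E → E → Prop) : E → E → Prop :=
  rcomp (rid Erel) (ropt (rcomp (rid F) po))

/-- `pacq = (po;[F])^?;[Eacq]`. -/
def pacq (Eacq F : E → Prop) (po : E → E → Prop) : E → E → Prop :=
  rcomp (ropt (rcomp po (rid F))) (rid Eacq)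

/-- synchronizes-with: `sw = prel;rseq;(incl ∩ rf);pacq`. -/
def sw (loc : E → Loc) (W Wrlx Erel Eacq F : E → Prop)
    (incl po rf rmw : E → E → Prop) : E → E → Prop :=
  rcomp (prel Erel F po) (rcomp (rseq loc W Wrlx incl po rf rmw)
    (rcomp (rinter incl rf) (pacq Eacq F po)))

/-- happens-before: `hb = (po ∪ (incl ∩ sw))⁺`. -/
def hb (loc : E → Loc) (W Wrlx Erel Eacq F : E → Prop)
    (incl po rf rmw : E → E → Prop) : E → E → Prop :=
  rtrans (runion po (rinter incl (sw loc W Wrlx Erel Eacq F incl po rf rmw)))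

/-- `scb = po ∪ (po|≠loc;hb;po|≠loc) ∪ hb|loc ∪ co ∪ fr`. -/
def scb (loc : E → Loc) (W Wrlx Erel Eacq F : E → Prop)
    (incl po rf co rmw : E → E → Prop) : E → E → Prop :=
  runion po (runion
    (rcomp (diffLoc loc po)
      (rcomp (hb loc W Wrlx Erel Eacq F incl po rf rmw) (diffLoc loc po)))
    (runion (sameLoc loc (hb loc W Wrlx Erel Eacq F incl po rf rmw))
      (runion co (fr rf co))))

/-- `pscb = ([Esc] ∪ [Fsc];hb^?);scb;([Esc] ∪ hb^?;[Fsc])`. -/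
def pscb (loc : E → Loc) (W Wrlx Erel Eacq F Esc Fsc : E → Prop)
    (incl po rf co rmw : E → E → Prop) : E → E → Prop :=
  rcomp (runion (rid Esc)
      (rcomp (rid Fsc) (ropt (hb loc W Wrlx Erel Eacq F incl po rf rmw))))
    (rcomp (scb loc W Wrlx Erel Eacq F incl po rf co rmw)
      (runion (rid Esc)
        (rcomp (ropt (hb loc W Wrlx Erel Eacq F incl po rf rmw)) (rid Fsc))))

/-- `pscf = [Fsc];(hb ∪ hb;eco;hb);[Fsc]`. -/
def pscf (loc : E → Loc) (W Wrlx Erel Eacq F Fsc : E → Prop)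
    (incl po rf co rmw : E → E → Prop) : E → E → Prop :=
  rcomp (rid Fsc)
    (rcomp (runion (hb loc W Wrlx Erel Eacq F incl po rf rmw)
        (rcomp (hb loc W Wrlx Erel Eacq F incl po rf rmw)
          (rcomp (eco rf co) (hb loc W Wrlx Erel Eacq F incl po rf rmw))))
      (rid Fsc))

/-- `psc = pscb ∪ pscf`. -/
def psc (loc : E → Loc) (W Wrlx Erel Eacq F Esc Fsc : E → Prop)
    (incl po rf co rmw : E → E → Prop) : E → E → Prop :=
  runion (pscb loc W Wrlx Erel Eacq F Esc Fsc incl po rf co rmw)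
    (pscf loc W Wrlx Erel Eacq F Fsc incl po rf co rmw)

end SRC11

namespace MP

/-- Locations: `0 = X`, `1 = Y`. -/
def loc : Fin 6 → Fin 2 := ![0, 1, 0, 1, 1, 0]
/-- Writes: the initialization writes `e₀, e₁` and the release writes `e₂, e₃`. -/
def W : Fin 6 → Prop := fun e => e = 0 ∨ e = 1 ∨ e = 2 ∨ e = 3
/-- Writes of order at least rlx (all writes). -/
def Wrlx : Fin 6 → Prop := W
/-- Events of order at least rel: the release writes `e₂, e₃`. -/
def Erel : Fin 6 → Prop := fun e => e = 2 ∨ e = 3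
/-- Events of order at least acq: the acquire read `e₄`. -/
def Eacq : Fin 6 → Prop := fun e => e = 4
/-- Fences: none. -/
def F : Fin 6 → Prop := fun _ => False
/-- SC events: none. -/
def Esc : Fin 6 → Prop := fun _ => False
/-- SC fences: none. -/
def Fsc : Fin 6 → Prop := fun _ => False
/-- Non-inclusive scopes: exactly the same-location pairs involving one of the
system-scoped initialization writes `e₀, e₁`; in particular neither `(e₃,e₄)`
nor `(e₂,e₅)` is in `incl`. -/
def incl : Fin 6 → Fin 6 → Prop := fun a b =>
  loc a = loc b ∧ (a = 0 ∨ a = 1 ∨ b = 0 ∨ b = 1)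
/-- Generators of program order. -/
def poBase : Fin 6 → Fin 6 → Prop := fun a b =>
  (a = 0 ∧ b = 2) ∨ (a = 1 ∧ b = 2) ∨ (a = 0 ∧ b = 4) ∨
  (a = 1 ∧ b = 4) ∨ (a = 2 ∧ b = 3) ∨ (a = 4 ∧ b = 5)
/-- Program order: the transitive closure of the generators. -/
def po : Fin 6 → Fin 6 → Prop := Relation.TransGen poBase
/-- Reads-from. -/
def rf : Fin 6 → Fin 6 → Prop := fun a b => (a = 3 ∧ b = 4) ∨ (a = 0 ∧ b = 5)
/-- Coherence order. -/
def co : Fin 6 → Fin 6 → Prop := fun a b => (a = 0 ∧ b = 2) ∨ (a = 1 ∧ b = 3)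
/-- RMW pairs: none. -/
def rmw : Fin 6 → Fin 6 → Prop := fun _ _ => False

end MP

set_option synthInstance.maxSize 5000
set_option maxHeartbeats 1000000

namespace MP

open SRC11

/-- Explicit transitive closure of `poBase`. -/
def P : Fin 6 → Fin 6 → Prop := fun a b =>
  poBase a b ∨ (a = 0 ∧ b = 3) ∨ (a = 1 ∧ b = 3) ∨ (a = 0 ∧ b = 5) ∨ (a = 1 ∧ b = 5)

/-- Explicit transitive closure of the eco generators. -/
def Q : Fin 6 → Fin 6 → Prop := fun a b =>
  (a = 3 ∧ b = 4) ∨ (a = 0 ∧ b = 5) ∨ (a = 0 ∧ b = 2) ∨ (a = 1 ∧ b = 3) ∨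
  (a = 5 ∧ b = 2) ∨ (a = 1 ∧ b = 4)

lemma po_sub_P : ∀ a b, po a b → P a b := by
  have base : ∀ a b, poBase a b → P a b := fun a b h => Or.inl h
  have step : ∀ a b c, P a b → poBase b c → P a c := by
    unfold P poBase; decide
  intro a b h
  induction h with
  | single h => exact base _ _ h
  | tail _ h ih => exact step _ _ _ ih h

lemma eco_sub_Q : ∀ a b, eco rf co a b → Q a b := by
  have base : ∀ a b, runion rf (runion co (fr rf co)) a b → Q a b := by
    unfold runion fr rcomp rinv rf co Q; decide
  have step : ∀ a b c, Q a b → runion rf (runion co (fr rf co)) b c → Q a c := by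
    unfold runion fr rcomp rinv rf co Q; decide
  intro a b h
  induction h with
  | single h => exact base _ _ h
  | tail _ h ih => exact step _ _ _ ih h

lemma sw_empty : ∀ a b, ¬ sw loc W Wrlx Erel Eacq F incl po rf rmw a b := by
  rintro a b ⟨m, _, n, _, k, ⟨hincl, hrf⟩, x, hx, hy, hacq⟩
  -- pacq forces k = x and x ∈ Eacq (F is empty)
  have hkx : k = x := by
    rcases hx with h | ⟨_, _, _, hF⟩
    · exact h
    · exact absurd hF id
  subst hkx hy
  have hk4 : k = 4 := hacq
  subst hk4
  rcases hrf with ⟨h3, _⟩ | ⟨_, h5⟩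
  · subst h3
    rcases hincl with ⟨_, h⟩
    rcases h with h | h | h | h <;> exact absurd h (by decide)
  · exact absurd h5 (by decide)

lemma hb_sub_P : ∀ a b, hb loc W Wrlx Erel Eacq F incl po rf rmw a b → P a b := by
  have step : ∀ a b c, P a b → P b c → P a c := by unfold P poBase; decide
  intro a b h
  induction h with
  | single h =>
    rcases h with h | ⟨_, hsw⟩
    · exact po_sub_P _ _ h
    · exact absurd hsw (sw_empty _ _)
  | tail _ h ih =>
    rcases h with h | ⟨_, hsw⟩
    · exact step _ _ _ ih (po_sub_P _ _ h)
    · exact absurd hsw (sw_empty _ _)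

end MP

open SRC11 MP in
/-- the scoped message-passing execution with non-inclusive scopes
and a stale read is SRC11-consistent: all four SRC11 axioms hold. -/
theorem mp_nonInclusive_consistent :
    SRC11.Irrefl (rcomp (hb loc W Wrlx Erel Eacq F incl po rf rmw)
      (ropt (eco rf co))) ∧
    (∀ a b, ¬ rinter rmw (rcomp (fr rf co) co) a b) ∧
    SRC11.Acyclic (rinter incl
      (psc loc W Wrlx Erel Eacq F Esc Fsc incl po rf co rmw)) ∧
    SRC11.Acyclic (runion po rf) := by
  have hPirr : ∀ a : Fin 6, ¬ P a a := by unfold P poBase; decide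
  have hPQ : ∀ a b : Fin 6, P a b → Q b a → False := by unfold P poBase Q; decide
  refine ⟨?_, ?_, ?_, ?_⟩
  · -- Coherence
    rintro a ⟨b, hhb, hopt⟩
    have hP : P a b := hb_sub_P _ _ hhb
    rcases hopt with rfl | heco
    · exact hPirr _ hP
    · exact hPQ _ _ hP (eco_sub_Q _ _ heco)
  · -- Atomicity
    rintro a b ⟨h, _⟩
    exact h
  · -- SC
    have hempty : ∀ a b,
        ¬ rinter incl (psc loc W Wrlx Erel Eacq F Esc Fsc incl po rf co rmw) a b := by
      rintro a b ⟨_, hpsc⟩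
      rcases hpsc with ⟨m, h1, _⟩ | ⟨m, ⟨_, hFsc⟩, _⟩
      · rcases h1 with ⟨_, hEsc⟩ | ⟨k, ⟨_, hFsc⟩, _⟩
        · exact hEsc
        · exact hFsc
      · exact hFsc
    intro a h
    cases h with
    | single h => exact hempty _ _ h
    | tail _ h => exact hempty _ _ h
  · -- No-Thin-Air
    have rank : ∀ a b, runion po rf a b →
        (![0,0,1,2,3,4] : Fin 6 → ℕ) a < (![0,0,1,2,3,4] : Fin 6 → ℕ) b := by
      have hPrank : ∀ a b : Fin 6, P a b →
          (![0,0,1,2,3,4] : Fin 6 → ℕ) a < (![0,0,1,2,3,4] : Fin 6 → ℕ) b := by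
        unfold P poBase; decide
      have hrfrank : ∀ a b : Fin 6, rf a b →
          (![0,0,1,2,3,4] : Fin 6 → ℕ) a < (![0,0,1,2,3,4] : Fin 6 → ℕ) b := by
        unfold rf; decide
      rintro a b (h | h)
      · exact hPrank _ _ (po_sub_P _ _ h)
      · exact hrfrank _ _ h
    have mono : ∀ a b, Relation.TransGen (runion po rf) a b →
        (![0,0,1,2,3,4] : Fin 6 → ℕ) a < (![0,0,1,2,3,4] : Fin 6 → ℕ) b := by
      intro a b h
      induction h with
      | single h => exact rank _ _ h
      | tail _ h ih => exact lt_trans ih (rank _ _ h)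
    intro a h
    exact lt_irrefl _ (mono _ _ h)
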